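/- Fix $N \ge 1$, $\mu \ge 2$, nonempty finite sets $D_s$ for $s \le N$ (with $D_s = \{1\}$ a singleton for $s \le 0$), and reals $y_{s,\eta}$ indexed by $s \in \{1,\dots,N\}$ and $\eta \in D_{s-\mu+1} \times \cdots \times D_s$. There exist real numbers $z_{s,\eta}$ indexed by $s \in \{1,\dots,N\}$ and $\eta \in D_{s-\mu+1} \times \cdots \times D_{s-1}$ satisfying (i) $z_{N,(\xi_{N-\mu+1},\dots,\xi_{N-1})} \ge y_{N,(\xi_{N-\mu+1},\dots,\xi_N)}$ for all $\xi_N \in D_N$, (ii) $z_{s,(\xi_{s-\mu+1},\dots,\xi_{s-1})} \ge y_{s,(\xi_{s-\mu+1},\dots,\xi_s)} + z_{s+1,(\xi_{s-\mu+2},\dots,\xi_s)}$ for $1 \le s \le N-1$ and all admissible indices, and (iii) $z_{1,(\xi_{2-\mu},\dots,\xi_0)} \le 0$, if and only if $\sum_{s=1}^N y_{s,(\xi_{s-\mu+1},\dots,\xi_s)} \le 0$ for every trajectory $(\xi_1,\dots,\xi_N) \in D_1 \times \cdots \times D_N$ (where $\xi_s = 1$ for $s \le 0$). -/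

import Mathlib

/-!
Given a window `η` of the last `μ - 1` states before stage `t`, let `V t η` be the supremum of
the tail sums `∑_{s=t}^N y_s` over all trajectories through `η`. Since the stage-`s` cost only
sees the states `s - μ + 1, …, s`, trajectories through the same window can be spliced at
stage `t`; this gives the Bellman inequality `y_t + V (t + 1) ≤ V t`, so `z = V` solves the
system, and `V` is finite because every tail can be completed by a fixed head into a full
trajectory, whose sum is nonpositive. Conversely, any feasible `z` dominates the tail sums by
backward induction, and `z 1 ≤ 0` bounds the full sums.
-/

open Finset

namespace WindowDP

variable {D : ℤ → Type} {μ : ℕ}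

def window (μ : ℕ) (t : ℤ) (ξ : ∀ s, D s) : (j : Fin (μ - 1)) → D (t - μ + 1 + (j.1 : ℤ)) :=
  fun j => ξ (t - μ + 1 + (j.1 : ℤ))

def stageCost (y : (t : ℤ) → ((j : Fin μ) → D (t - μ + 1 + (j.1 : ℤ))) → ℝ) (s : ℤ)
    (ξ : ∀ s, D s) : ℝ :=
  y s fun j => ξ (s - μ + 1 + (j.1 : ℤ))

noncomputable def headSum
    (y : (t : ℤ) → ((j : Fin μ) → D (t - μ + 1 + (j.1 : ℤ))) → ℝ) (t : ℤ) (ξ : ∀ s, D s) : ℝ :=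
  ∑ s ∈ Ico 1 t, stageCost y s ξ

noncomputable def tailSum (N : ℕ)
    (y : (t : ℤ) → ((j : Fin μ) → D (t - μ + 1 + (j.1 : ℤ))) → ℝ) (t : ℤ) (ξ : ∀ s, D s) : ℝ :=
  ∑ s ∈ Icc t (N : ℤ), stageCost y s ξ

noncomputable def valueFn (N : ℕ)
    (y : (t : ℤ) → ((j : Fin μ) → D (t - μ + 1 + (j.1 : ℤ))) → ℝ) (t : ℤ)
    (η : (j : Fin (μ - 1)) → D (t - μ + 1 + (j.1 : ℤ))) : ℝ :=
  sSup (tailSum N y t '' {ξ | window μ t ξ = η})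

def splice (t : ℤ) (ξ ξ' : ∀ s, D s) : ∀ s, D s :=
  fun p => if p < t then ξ p else ξ' p

variable {N : ℕ} {y : (t : ℤ) → ((j : Fin μ) → D (t - μ + 1 + (j.1 : ℤ))) → ℝ}

lemma eq_of_window_eq {t : ℤ} {ξ ξ' : ∀ s, D s} (h : window μ t ξ = window μ t ξ') {p : ℤ}
    (hp₁ : t - μ + 1 ≤ p) (hp₂ : p < t) : ξ p = ξ' p := by
  have hj : (p - (t - μ + 1)).toNat < μ - 1 := by omega
  have hp : t - μ + 1 + ((p - (t - μ + 1)).toNat : ℤ) = p := by omega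
  have := congr_fun h ⟨_, hj⟩
  simp only [window] at this
  rwa [hp] at this

lemma splice_of_lt {t p : ℤ} (ξ ξ' : ∀ s, D s) (hp : p < t) : splice t ξ ξ' p = ξ p :=
  if_pos hp

lemma splice_of_window_eq {t p : ℤ} {ξ ξ' : ∀ s, D s} (h : window μ t ξ = window μ t ξ')
    (hp : t - μ + 1 ≤ p) : splice t ξ ξ' p = ξ' p := by
  unfold splice
  split_ifs with hpt
  · exact eq_of_window_eq h hp hpt
  · rfl

lemma stageCost_congr {s : ℤ} {ξ ξ' : ∀ s, D s}
    (h : ∀ p, s - μ + 1 ≤ p → p ≤ s → ξ p = ξ' p) : stageCost y s ξ = stageCost y s ξ' := by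
  unfold stageCost
  congr 1
  funext j
  exact h _ (by omega) (by omega)

lemma headSum_congr {t : ℤ} {ξ ξ' : ∀ s, D s} (h : ∀ p, p < t → ξ p = ξ' p) :
    headSum y t ξ = headSum y t ξ' :=
  sum_congr rfl fun s hs =>
    stageCost_congr fun p _ hp => h p (by rw [mem_Ico] at hs; omega)

lemma tailSum_congr {t : ℤ} {ξ ξ' : ∀ s, D s} (h : ∀ p, t - μ + 1 ≤ p → ξ p = ξ' p) :
    tailSum N y t ξ = tailSum N y t ξ' :=
  sum_congr rfl fun s hs =>
    stageCost_congr fun p hp _ => h p (by rw [mem_Icc] at hs; omega)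

lemma tailSum_self (ξ : ∀ s, D s) : tailSum N y N ξ = stageCost y N ξ := by
  rw [tailSum, Icc_self, sum_singleton]

lemma tailSum_eq_stageCost_add {t : ℤ} (ht : t ≤ N) (ξ : ∀ s, D s) :
    tailSum N y t ξ = stageCost y t ξ + tailSum N y (t + 1) ξ := by
  have hI : Icc t (N : ℤ) = insert t (Icc (t + 1) (N : ℤ)) := by
    ext p; simp only [mem_Icc, mem_insert]; omega
  rw [tailSum, hI, sum_insert (by simp only [mem_Icc]; omega)]
  rfl

lemma headSum_add_tailSum {t : ℤ} (ht₁ : 1 ≤ t) (ht₂ : t ≤ N + 1) (ξ : ∀ s, D s) :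
    headSum y t ξ + tailSum N y t ξ = tailSum N y 1 ξ := by
  have hI : Icc 1 (N : ℤ) = Ico 1 t ∪ Icc t (N : ℤ) := by
    ext p; simp only [mem_Icc, mem_Ico, mem_union]; omega
  have hdisj : Disjoint (Ico 1 t) (Icc t (N : ℤ)) := by
    rw [disjoint_left]; intro p; simp only [mem_Icc, mem_Ico]; omega
  rw [headSum, tailSum, tailSum, hI, sum_union hdisj]

lemma tailSum_splice {t : ℤ} {ξ ξ' : ∀ s, D s} (h : window μ t ξ = window μ t ξ') :
    tailSum N y t (splice t ξ ξ') = tailSum N y t ξ' :=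
  tailSum_congr fun _ hp => splice_of_window_eq h hp

lemma headSum_splice {t : ℤ} (ξ ξ' : ∀ s, D s) :
    headSum y t (splice t ξ ξ') = headSum y t ξ :=
  headSum_congr fun _ hp => splice_of_lt ξ ξ' hp

section Feasible

variable (z : (t : ℤ) → ((j : Fin (μ - 1)) → D (t - μ + 1 + (j.1 : ℤ))) → ℝ)

lemma tailSum_le_of_bellman (hlast : ∀ ξ, stageCost y N ξ ≤ z N (window μ N ξ))
    (hstep : ∀ t : ℤ, 1 ≤ t → t ≤ (N : ℤ) - 1 → ∀ ξ,
      stageCost y t ξ + z (t + 1) (window μ (t + 1) ξ) ≤ z t (window μ t ξ))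
    (ξ : ∀ s, D s) {t : ℤ} (ht₁ : 1 ≤ t) (ht₂ : t ≤ N) :
    tailSum N y t ξ ≤ z t (window μ t ξ) := by
  induction t, ht₂ using Int.leInductionDown with
  | base => rw [tailSum_self]; exact hlast ξ
  | pred n hn ih =>
    have hstep' := hstep (n - 1) ht₁ (by omega) ξ
    rw [sub_add_cancel] at hstep'
    rw [tailSum_eq_stageCost_add (by omega), sub_add_cancel]
    linarith [ih (by omega)]

end Feasible

section ValueFunction

variable (hall : ∀ ξ : ∀ s, D s, tailSum N y 1 ξ ≤ 0)
include hall

lemma bddAbove_tailSum_image {t : ℤ} (ht₁ : 1 ≤ t) (ht₂ : t ≤ N + 1)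
    (η : (j : Fin (μ - 1)) → D (t - μ + 1 + (j.1 : ℤ))) :
    BddAbove (tailSum N y t '' {ξ | window μ t ξ = η}) := by
  rcases Set.eq_empty_or_nonempty {ξ | window μ t ξ = η} with hempty | ⟨ξ₀, hξ₀⟩
  · simp [hempty]
  refine ⟨-headSum y t ξ₀, ?_⟩
  rintro _ ⟨ξ, hξ, rfl⟩
  have hw : window μ t ξ₀ = window μ t ξ := hξ₀.trans hξ.symm
  have := hall (splice t ξ₀ ξ)
  rw [← headSum_add_tailSum ht₁ ht₂, headSum_splice, tailSum_splice hw] at this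
  linarith

lemma tailSum_le_valueFn {t : ℤ} (ht₁ : 1 ≤ t) (ht₂ : t ≤ N + 1) (ξ : ∀ s, D s) :
    tailSum N y t ξ ≤ valueFn N y t (window μ t ξ) :=
  le_csSup (bddAbove_tailSum_image hall ht₁ ht₂ _) ⟨ξ, rfl, rfl⟩

lemma stageCost_add_valueFn_le {t : ℤ} (ht₁ : 1 ≤ t) (ht₂ : t ≤ N) (ξ : ∀ s, D s) :
    stageCost y t ξ + valueFn N y (t + 1) (window μ (t + 1) ξ)
      ≤ valueFn N y t (window μ t ξ) := by
  rw [← le_sub_iff_add_le']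
  refine csSup_le ⟨_, ξ, rfl, rfl⟩ ?_
  rintro _ ⟨ξ', hξ', rfl⟩
  rw [le_sub_iff_add_le']
  have hw : window μ t (splice (t + 1) ξ ξ') = window μ t ξ :=
    funext fun j => splice_of_lt ξ ξ' (by omega)
  have hcost : stageCost y t (splice (t + 1) ξ ξ') = stageCost y t ξ :=
    stageCost_congr fun p _ hp => splice_of_lt ξ ξ' (by omega)
  calc stageCost y t ξ + tailSum N y (t + 1) ξ'
      = tailSum N y t (splice (t + 1) ξ ξ') := by
        rw [tailSum_eq_stageCost_add ht₂, hcost, tailSum_splice hξ'.symm]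
    _ ≤ valueFn N y t (window μ t ξ) := hw ▸ tailSum_le_valueFn hall ht₁ (by omega) _

lemma valueFn_one_nonpos (ξ : ∀ s, D s) : valueFn N y 1 (window μ 1 ξ) ≤ 0 :=
  csSup_le ⟨_, ξ, rfl, rfl⟩ fun _ ⟨ξ', _, hr⟩ => hr ▸ hall ξ'

end ValueFunction

end WindowDP

open WindowDP

theorem stmt_4_general (N : ℕ) (hN : 1 ≤ N) (μ : ℕ)
    (D : ℤ → Type)
    (y : (t : ℤ) → ((j : Fin μ) → D (t - μ + 1 + (j.1 : ℤ))) → ℝ) :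
    (∃ z : (t : ℤ) → ((j : Fin (μ - 1)) → D (t - μ + 1 + (j.1 : ℤ))) → ℝ,
        (∀ ξ : ∀ s : ℤ, D s,
            y N (fun j => ξ ((N : ℤ) - μ + 1 + (j.1 : ℤ)))
              ≤ z N (fun j => ξ ((N : ℤ) - μ + 1 + (j.1 : ℤ)))) ∧
        (∀ t : ℤ, 1 ≤ t → t ≤ (N : ℤ) - 1 → ∀ ξ : ∀ s : ℤ, D s,
            y t (fun j => ξ (t - μ + 1 + (j.1 : ℤ)))
              + z (t + 1) (fun j => ξ (t + 1 - μ + 1 + (j.1 : ℤ)))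
              ≤ z t (fun j => ξ (t - μ + 1 + (j.1 : ℤ)))) ∧
        (∀ ξ : ∀ s : ℤ, D s, z 1 (fun j => ξ (1 - μ + 1 + (j.1 : ℤ))) ≤ 0))
    ↔ (∀ ξ : ∀ s : ℤ, D s,
        ∑ t ∈ Finset.Icc (1 : ℤ) N, y t (fun j => ξ (t - μ + 1 + (j.1 : ℤ))) ≤ 0) := by
  constructor
  · rintro ⟨z, hlast, hstep, hfirst⟩ ξ
    exact (tailSum_le_of_bellman z hlast hstep ξ le_rfl (by exact_mod_cast hN)).trans (hfirst ξ)
  · intro hall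
    refine ⟨valueFn N y, fun ξ => ?_, fun t ht₁ ht₂ ξ => ?_, valueFn_one_nonpos hall⟩
    · have := tailSum_le_valueFn hall (t := N) (by exact_mod_cast hN) (by omega) ξ
      rwa [tailSum_self] at this
    · exact stageCost_add_valueFn_le hall ht₁ (by omega) ξ

/-- Exactness of the backward dynamic-programming polyhedral representation
for memory depth `μ ≥ 2`: the linear system (i)-(iii) in the auxiliary variables
`z t η` (indexed by `(μ-1)`-windows) is feasible iff all trajectory sums of the
window-indexed terms `y` are nonpositive.  Stages run over `1,…,N`; sets `D s` with
`s ≤ 0` are singletons. -/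
theorem stmt_4 (N : ℕ) (hN : 1 ≤ N) (μ : ℕ) (hμ : 2 ≤ μ)
    (D : ℤ → Type) [∀ s, Fintype (D s)] [∀ s, Nonempty (D s)]
    (hsing : ∀ s : ℤ, s ≤ 0 → Subsingleton (D s))
    (y : (t : ℤ) → ((j : Fin μ) → D (t - μ + 1 + (j.1 : ℤ))) → ℝ) :
    (∃ z : (t : ℤ) → ((j : Fin (μ - 1)) → D (t - μ + 1 + (j.1 : ℤ))) → ℝ,
        (∀ ξ : ∀ s : ℤ, D s,
            y N (fun j => ξ ((N : ℤ) - μ + 1 + (j.1 : ℤ)))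
              ≤ z N (fun j => ξ ((N : ℤ) - μ + 1 + (j.1 : ℤ)))) ∧
        (∀ t : ℤ, 1 ≤ t → t ≤ (N : ℤ) - 1 → ∀ ξ : ∀ s : ℤ, D s,
            y t (fun j => ξ (t - μ + 1 + (j.1 : ℤ)))
              + z (t + 1) (fun j => ξ (t + 1 - μ + 1 + (j.1 : ℤ)))
              ≤ z t (fun j => ξ (t - μ + 1 + (j.1 : ℤ)))) ∧
        (∀ ξ : ∀ s : ℤ, D s, z 1 (fun j => ξ (1 - μ + 1 + (j.1 : ℤ))) ≤ 0))
    ↔ (∀ ξ : ∀ s : ℤ, D s,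
        ∑ t ∈ Finset.Icc (1 : ℤ) N, y t (fun j => ξ (t - μ + 1 + (j.1 : ℤ))) ≤ 0) :=
  stmt_4_general N hN μ D y
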